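/- Let S be a hereditarily closed set of pregames. Then every position G ∈ S is a number (numeric) if and only if for every position G ∈ S, every pair (G^L, G^R) consisting of a left option and a right option of G satisfies the F1 property. -/

import Mathlib

universe u

namespace SetTheory

/-- Pre-games, as in Mathlib's former `SetTheory.PGame` (removed from Mathlib). -/
inductive PGame : Type (u + 1)
  | mk : ∀ α β : Type u, (α → PGame) → (β → PGame) → PGame

namespace PGame

/-- The indexing type for allowable moves by Left. -/
def LeftMoves : PGame → Type u
  | mk l _ _ _ => l

/-- The indexing type for allowable moves by Right. -/
def RightMoves : PGame → Type u
  | mk _ r _ _ => r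

/-- The new game after Left makes an allowed move. -/
def moveLeft : ∀ g : PGame, LeftMoves g → PGame
  | mk _ _ L _ => L

/-- The new game after Right makes an allowed move. -/
def moveRight : ∀ g : PGame, RightMoves g → PGame
  | mk _ _ _ R => R

/-- Auxiliary recursion on the second game for `leLF`. -/
def leLFAux {xl xr : Type u} (fL : xl → PGame → Prop × Prop) (fR : xr → PGame → Prop × Prop) :
    PGame → Prop × Prop
  | mk _ _ yL yR =>
    ((∀ i, (fL i (mk _ _ yL yR)).2) ∧ ∀ j, (leLFAux fL fR (yR j)).2,
      (∃ i, (leLFAux fL fR (yL i)).1) ∨ ∃ j, (fR j (mk _ _ yL yR)).1)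

/-- The pair (`x ≤ y`, `x ⧏ y`), defined by simultaneous recursion as in the former Mathlib:
`x ≤ y ↔ (∀ i, xL i ⧏ y) ∧ ∀ j, x ⧏ yR j` and `x ⧏ y ↔ (∃ i, x ≤ yL i) ∨ ∃ j, xR j ≤ y`. -/
def leLF : PGame → PGame → Prop × Prop
  | mk _ _ xL xR => leLFAux (fun i => leLF (xL i)) (fun j => leLF (xR j))

instance : LE PGame :=
  ⟨fun x y => (leLF x y).1⟩

instance : LT PGame :=
  ⟨fun x y => x ≤ y ∧ ¬y ≤ x⟩

/-- A pre-game is numeric if everything in the L set is less than everything in the R set,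
and all the elements of L and R are also numeric. -/
def Numeric : PGame → Prop
  | ⟨_, _, L, R⟩ => (∀ i j, L i < R j) ∧ (∀ i, Numeric (L i)) ∧ ∀ j, Numeric (R j)

end PGame

end SetTheory

open SetTheory PGame

/-- A set of pregames is hereditarily closed (HCR) if it is closed under taking
left and right options. -/
def HCR (S : Set PGame) : Prop :=
  ∀ G ∈ S, (∀ i, G.moveLeft i ∈ S) ∧ ∀ j, G.moveRight j ∈ S

/-- The pair `(xL, xR)` satisfies the F1 property if some left option of `xR` is `≥ xL`,
or some right option of `xL` is `≤ xR`. -/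
def F1 (xL xR : PGame) : Prop :=
  (∃ i, xL ≤ xR.moveLeft i) ∨ ∃ j, xL.moveRight j ≤ xR

/-- The pair `(xL, xR)` satisfies the F2 property if some right option of `xL` is `≤`
some left option of `xR`. -/
def F2 (xL xR : PGame) : Prop :=
  ∃ (j : xL.RightMoves) (i : xR.LeftMoves), xL.moveRight j ≤ xR.moveLeft i

namespace SetTheory.PGame

def PLF (x y : PGame.{u}) : Prop := (leLF x y).2

theorem pg_le_def (x y : PGame) :
    x ≤ y ↔ (∀ i, PLF (x.moveLeft i) y) ∧ ∀ j, PLF x (y.moveRight j) := by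
  cases x; cases y; exact Iff.rfl

theorem pg_lf_def (x y : PGame) :
    PLF x y ↔ (∃ i, x ≤ y.moveLeft i) ∨ ∃ j, x.moveRight j ≤ y := by
  cases x; cases y; exact Iff.rfl

theorem pg_not_le_and (x : PGame) :
    ∀ y : PGame, (¬ x ≤ y ↔ PLF y x) ∧ (¬ y ≤ x ↔ PLF x y) := by
  induction x with
  | mk xl xr xL xR IHxl IHxr =>
  intro y
  induction y with
  | mk yl yr yL yR IHyl IHyr =>
  constructor
  · rw [pg_le_def, pg_lf_def]
    simp only [not_and_or, not_forall]
    exact or_congr (exists_congr fun i => not_iff_comm.1 (IHxl i _).2)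
      (exists_congr fun j => not_iff_comm.1 (IHyr j).2)
  · rw [pg_le_def, pg_lf_def]
    simp only [not_and_or, not_forall]
    exact or_congr (exists_congr fun i => not_iff_comm.1 (IHyl i).1)
      (exists_congr fun j => not_iff_comm.1 (IHxr j _).1)

theorem pg_lf_iff_not_le (x y : PGame) : PLF x y ↔ ¬ y ≤ x :=
  ((pg_not_le_and y x).1).symm

theorem pg_le_trans_aux {x y z : PGame}
    (h₁ : ∀ {i}, y ≤ z → z ≤ x.moveLeft i → y ≤ x.moveLeft i)
    (h₂ : ∀ {j}, z.moveRight j ≤ x → x ≤ y → z.moveRight j ≤ y) (hxy : x ≤ y) (hyz : y ≤ z) :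
    x ≤ z := by
  rw [pg_le_def]
  refine ⟨fun i => (pg_lf_iff_not_le _ _).2 fun h => ?_,
    fun j => (pg_lf_iff_not_le _ _).2 fun h => ?_⟩
  · exact ((pg_lf_iff_not_le _ _).1 (((pg_le_def _ _).1 hxy).1 i)) (h₁ hyz h)
  · exact ((pg_lf_iff_not_le _ _).1 (((pg_le_def _ _).1 hyz).2 j)) (h₂ h hxy)

theorem pg_le_trans3 (x : PGame) : ∀ y z : PGame,
    (x ≤ y → y ≤ z → x ≤ z) ∧ (y ≤ z → z ≤ x → y ≤ x) ∧ (z ≤ x → x ≤ y → z ≤ y) := by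
  induction x with
  | mk xl xr xL xR IHxl IHxr =>
  intro y
  induction y with
  | mk yl yr yL yR IHyl IHyr =>
  intro z
  induction z with
  | mk zl zr zL zR IHzl IHzr =>
  exact
    ⟨pg_le_trans_aux (fun {i} => (IHxl i _ _).2.1) fun {j} => (IHzr j).2.2,
      pg_le_trans_aux (fun {i} => (IHyl i _).2.2) fun {j} => (IHxr j _ _).1,
      pg_le_trans_aux (fun {i} => (IHzl i).1) fun {j} => (IHyr j _).2.1⟩

theorem pg_le_trans {x y z : PGame} (h₁ : x ≤ y) (h₂ : y ≤ z) : x ≤ z :=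
  (pg_le_trans3 x y z).1 h₁ h₂

theorem pg_lf_asymm (x : PGame) : Numeric x → ∀ y, Numeric y → PLF x y → ¬ PLF y x := by
  induction x with
  | mk xl xr xL xR IHxl IHxr =>
  intro ox y oy h₁ h₂
  cases y with
  | mk yl yr yL yR =>
  obtain ⟨hx, oxl, oxr⟩ := ox
  obtain ⟨hy, oyl, oyr⟩ := oy
  rw [pg_lf_def] at h₁ h₂
  rcases h₁ with ⟨i, h₁⟩ | ⟨j, h₁⟩ <;> rcases h₂ with ⟨i', h₂⟩ | ⟨j', h₂⟩
  · exact IHxl i' (oxl i') _ (oyl i) (((pg_le_def _ _).1 h₁).1 i') (((pg_le_def _ _).1 h₂).1 i)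
  · exact ((pg_lf_iff_not_le _ _).1 ((pg_lf_iff_not_le _ _).2 (hy i j').2)) (pg_le_trans h₂ h₁)
  · exact ((pg_lf_iff_not_le _ _).1 ((pg_lf_iff_not_le _ _).2 (hx i' j).2)) (pg_le_trans h₁ h₂)
  · exact IHxr j (oxr j) _ (oyr j') (((pg_le_def _ _).1 h₁).2 j') (((pg_le_def _ _).1 h₂).2 j)

theorem pg_le_of_lf {x y : PGame} (h : PLF x y) (ox : Numeric x) (oy : Numeric y) : x ≤ y := by
  by_contra h'
  exact pg_lf_asymm x ox y oy h ((pg_lf_iff_not_le y x).2 h')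

end SetTheory.PGame

theorem stmt_3 (S : Set PGame) (hS : HCR S) :
    (∀ G ∈ S, G.Numeric) ↔
      ∀ G ∈ S, ∀ (i : G.LeftMoves) (j : G.RightMoves),
        F1 (G.moveLeft i) (G.moveRight j) := by
  constructor
  · intro h G hG i j
    cases G with
    | mk xl xr xL xR =>
    obtain ⟨hx, _, _⟩ := h _ hG
    exact (pg_lf_def _ _).1 ((pg_lf_iff_not_le _ _).2 (hx i j).2)
  · intro h G hG
    induction G with
    | mk xl xr xL xR IHl IHr =>
      have nl : ∀ i, Numeric (xL i) := fun i => IHl i ((hS _ hG).1 i)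
      have nr : ∀ j, Numeric (xR j) := fun j => IHr j ((hS _ hG).2 j)
      exact ⟨fun i j => ⟨pg_le_of_lf ((pg_lf_def _ _).2 (h _ hG i j)) (nl i) (nr j),
        (pg_lf_iff_not_le _ _).1 ((pg_lf_def _ _).2 (h _ hG i j))⟩, nl, nr⟩
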